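/- arXiv:2507.03465 — 2 statements merged into one kernel-verified Lean document; each statement's English description precedes it below -/
import Mathlib

section
/- Let Σ be a finite nonempty alphabet and let L ⊆ ℬ^Σ be a regular tree language. Then L has asymptotic density 1 (i.e. P_lim(L) = 1) if and only if there exists a tree S ∈ ℬ^Σ such that every tree T with S ⪯ T satisfies T ∈ L. -/
/-!
If every tree containing `S` lies in `L`, then `Lᶜ` is contained in the set `A` of trees avoiding
`S`. This set is closed under taking subtrees, so its densities satisfy
`q (n + 1) ≤ ∑_{i + j = n} (C_i C_j / C_{n+1}) q_i q_j`, where the weights sum to `1`. The weight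
of `(|S|, j)` is at least `C_{|S|} / 4 ^ (|S| + 1)` and `q_{|S|} < 1`, so a bound `q ≤ β` holding
from some point on improves to `q ≤ (1 - δ) β` further on, with `δ > 0` fixed; hence `q n → 0`.

Conversely, a tree automaton for `L` induces a finite congruence: trees with the same set of run
values are interchangeable in every context. If no `S` works, each class `U` has a context `c_U`
sending all of `U` outside `L`. Among the trees of size `n` some class has a share of at least
`1 / #classes`, and `c_U` maps it injectively into `Lᶜ` at size `n + |c_U|`; since
`C_{n+m} ≤ 4 ^ m C_n`, this gives a share of `Lᶜ` bounded below independently of `n`.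
-/

open Filter Topology

namespace Sparse

inductive BTree (α : Type*) where
  | nil : BTree α
  | node : α → BTree α → BTree α → BTree α

namespace BTree

variable {α : Type*}

/-- The number of nodes of a binary tree. -/
def size : BTree α → ℕ
  | nil => 0
  | node _ l r => size l + size r + 1

/-- `Subtree S T` means `S = T`, or `T` is nonempty and `S` is a subtree of the left or
right subtree of the root of `T`. -/
inductive Subtree : BTree α → BTree α → Prop where
  | refl (T : BTree α) : Subtree T T
  | left {S l r : BTree α} {a : α} : Subtree S l → Subtree S (node a l r)
  | right {S l r : BTree α} {a : α} : Subtree S r → Subtree S (node a l r)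

end BTree

variable {α : Type*}

/-- A run of a tree automaton with transition relation `Δ` on a binary tree: the empty tree is
assigned `none` (i.e. `⊥`), and a nonempty tree with root label `a` and run values `ql`, `qr` on
the two subtrees is assigned a state `q` with `(ql, qr, a, q) ∈ Δ`. -/
inductive Run {Q : Type*} (Δ : Option Q → Option Q → α → Q → Prop) :
    BTree α → Option Q → Prop where
  | nil : Run Δ BTree.nil none
  | node {a : α} {l r : BTree α} {ql qr : Option Q} {q : Q} :
      Run Δ l ql → Run Δ r qr → Δ ql qr a q → Run Δ (BTree.node a l r) (some q)

/-- A tree automaton with transitions `Δ` and accepting states `F` accepts `T` if some run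
assigns `T` a state in `F`. -/
def TAccepts {Q : Type*} (Δ : Option Q → Option Q → α → Q → Prop) (F : Set Q)
    (T : BTree α) : Prop :=
  ∃ q ∈ F, Run Δ T (some q)

/-- A tree language is regular iff it is the set of trees accepted by some tree automaton
with finitely many states. -/
def RegularTreeLang (L : Set (BTree α)) : Prop :=
  ∃ (Q : Type) (_ : Fintype Q) (Δ : Option Q → Option Q → α → Q → Prop) (F : Set Q),
    L = {T | TAccepts Δ F T}

/-- The relative number of `n`-node trees in `L`:
`|L ∩ ℬ^Σ_n| / (C_n ⬝ |Σ|^n)`, where `C_n` is the `n`-th Catalan number. -/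
noncomputable def density [Fintype α] (L : Set (BTree α)) (n : ℕ) : ℝ :=
  (Nat.card {T : BTree α // T ∈ L ∧ T.size = n} : ℝ) /
    ((catalan n : ℝ) * (Fintype.card α : ℝ) ^ n)

/-- `L` has asymptotic density `c` if `density L n` tends to `c` as `n → ∞`. -/
def HasDensity [Fintype α] (L : Set (BTree α)) (c : ℝ) : Prop :=
  Tendsto (density L) atTop (𝓝 c)

/-- The upper asymptotic density `P̄_lim(L) = limsup_n density L n`. -/
noncomputable def upperDensity [Fintype α] (L : Set (BTree α)) : ℝ :=
  limsup (density L) atTop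

/-- `LT = {conc_a(S, T) : a ∈ Σ, S ∈ L}`. -/
def concL (L : Set (BTree α)) (T : BTree α) : Set (BTree α) :=
  {X | ∃ (a : α) (S : BTree α), S ∈ L ∧ X = BTree.node a S T}

/-- `LT⁻¹ = {S : ∃ a, conc_a(S, T) ∈ L}`. -/
def quotR (L : Set (BTree α)) (T : BTree α) : Set (BTree α) :=
  {S | ∃ a : α, BTree.node a S T ∈ L}

/-- `T⁻¹L = {S : ∃ a, conc_a(T, S) ∈ L}`. -/
def quotL (T : BTree α) (L : Set (BTree α)) : Set (BTree α) :=
  {S | ∃ a : α, BTree.node a T S ∈ L}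

/-- `L[T_k, …, T_1]⁻¹`, where the list is `[T_k, …, T_1]` (so the head is `T_k`):
`L[]⁻¹ = L` and `L[T_k,…,T_1]⁻¹ = (L[T_{k-1},…,T_1]⁻¹)T_k⁻¹ ∪ T_k⁻¹(L[T_{k-1},…,T_1]⁻¹)`. -/
def quotIter (L : Set (BTree α)) : List (BTree α) → Set (BTree α)
  | [] => L
  | T :: Ts => quotR (quotIter L Ts) T ∪ quotL T (quotIter L Ts)

/-- A state `q` is reachable if some run of the automaton on some tree assigns `q` to the tree. -/
def TReachable {Q : Type*} (Δ : Option Q → Option Q → α → Q → Prop) (q : Q) : Prop :=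
  ∃ T : BTree α, Run Δ T (some q)

/-- A set of states `V` is a sink if every transition involving a state of `V` as one of the
two child values leads into `V`. -/
def Sink {Q : Type*} (Δ : Option Q → Option Q → α → Q → Prop) (V : Set Q) : Prop :=
  ∀ q ∈ V, ∀ (q' : Option Q) (a : α) (q'' : Q),
    (Δ (some q) q' a q'' ∨ Δ q' (some q) a q'') → q'' ∈ V

open Finset

theorem catalan_pos (n : ℕ) : 0 < catalan n :=
  Nat.pos_of_mul_pos_left ((succ_mul_catalan_eq_centralBinom n).symm ▸ n.centralBinom_pos)

theorem catalan_succ_le_four_mul (n : ℕ) : catalan (n + 1) ≤ 4 * catalan n := by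
  have h₁ := succ_mul_catalan_eq_centralBinom (n + 1)
  have h₂ := Nat.succ_mul_centralBinom_succ n
  have h₃ := succ_mul_catalan_eq_centralBinom n
  refine Nat.le_of_mul_le_mul_left (c := (n + 1) * (n + 2)) ?_ (by positivity)
  nlinarith

theorem catalan_add_le_four_pow_mul (n m : ℕ) : catalan (n + m) ≤ 4 ^ m * catalan n := by
  induction m with
  | zero => simp
  | succ m ih =>
    calc catalan (n + m + 1) ≤ 4 * catalan (n + m) := catalan_succ_le_four_mul _
      _ ≤ 4 * (4 ^ m * catalan n) := Nat.mul_le_mul_left 4 ih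
      _ = 4 ^ (m + 1) * catalan n := by ring

theorem sum_antidiagonal_catalan_mul_div (n : ℕ) :
    ∑ ij ∈ antidiagonal n, (catalan ij.1 * catalan ij.2 / catalan (ij.1 + ij.2 + 1) : ℝ) = 1 := by
  have h : ∀ ij ∈ antidiagonal n, (catalan ij.1 * catalan ij.2 / catalan (ij.1 + ij.2 + 1) : ℝ) =
      catalan ij.1 * catalan ij.2 / catalan (n + 1) := fun ij hij => by
    rw [HasAntidiagonal.mem_antidiagonal.1 hij]
  rw [sum_congr rfl h, ← sum_div, div_eq_one_iff_eq (Nat.cast_pos.2 (catalan_pos _)).ne']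
  exact_mod_cast (catalan_succ' n).symm

theorem catalan_div_four_pow_le (s j : ℕ) :
    (catalan s / 4 ^ (s + 1) : ℝ) ≤ catalan s * catalan j / catalan (s + j + 1) := by
  have hj : (0 : ℝ) < catalan j := Nat.cast_pos.2 (catalan_pos j)
  have hsj : (0 : ℝ) < catalan (s + j + 1) := Nat.cast_pos.2 (catalan_pos _)
  have h : (catalan (s + j + 1) : ℝ) ≤ 4 ^ (s + 1) * catalan j := by
    rw [show s + j + 1 = j + (s + 1) by ring]
    exact_mod_cast catalan_add_le_four_pow_mul j (s + 1)
  rw [div_le_div_iff₀ (by positivity) hsj]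
  calc (catalan s * catalan (s + j + 1) : ℝ) ≤ catalan s * (4 ^ (s + 1) * catalan j) := by gcongr
    _ = _ := by ring

section SubcriticalRecursion

variable {w : ℕ → ℕ → ℝ} {q : ℕ → ℝ} {c : ℝ} {s : ℕ}

theorem eventually_le_mul_of_eventually_le (hw : ∀ i j, 0 ≤ w i j)
    (hw_sum : ∀ n, ∑ ij ∈ antidiagonal n, w ij.1 ij.2 ≤ 1) (hcw : ∀ j, c ≤ w s j)
    (hq0 : ∀ n, 0 ≤ q n) (hq1 : ∀ n, q n ≤ 1)
    (hrec : ∀ n, q (n + 1) ≤ ∑ ij ∈ antidiagonal n, w ij.1 ij.2 * (q ij.1 * q ij.2))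
    {β : ℝ} (hβ : 0 ≤ β) (h : ∀ᶠ n in atTop, q n ≤ β) :
    ∀ᶠ n in atTop, q n ≤ (1 - c * (1 - q s)) * β := by
  obtain ⟨N, hN⟩ := eventually_atTop.1 h
  refine eventually_atTop.2 ⟨2 * N + s + 1, fun n hn => ?_⟩
  obtain ⟨n, rfl⟩ : ∃ m, n = m + 1 := ⟨n - 1, by omega⟩
  -- As `i + j ≥ 2 * N`, one of `q i`, `q j` is at most `β`; the term `(s, n - s)` also keeps `q s`.
  have hterm : ∀ ij ∈ antidiagonal n, w ij.1 ij.2 * (q ij.1 * q ij.2) ≤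
      w ij.1 ij.2 * β - if ij = (s, n - s) then w ij.1 ij.2 * β * (1 - q s) else 0 := by
    rintro ⟨i, j⟩ hij
    rw [HasAntidiagonal.mem_antidiagonal] at hij
    split_ifs with hs
    · obtain ⟨rfl, rfl⟩ := Prod.mk.inj hs
      have := mul_le_mul_of_nonneg_left (hN (n - i) (by omega)) (mul_nonneg (hw i (n - i)) (hq0 i))
      linarith
    · have hqq : q i * q j ≤ β := by
        rcases le_total N i with hi | hi
        · exact (mul_le_of_le_one_right (hq0 i) (hq1 j)).trans (hN i hi)
        · exact (mul_le_of_le_one_left (hq0 j) (hq1 i)).trans (hN j (by omega))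
      simpa using mul_le_mul_of_nonneg_left hqq (hw i j)
  have hmem : (s, n - s) ∈ antidiagonal n := HasAntidiagonal.mem_antidiagonal.2 (by simp; omega)
  calc q (n + 1) ≤ ∑ ij ∈ antidiagonal n, w ij.1 ij.2 * (q ij.1 * q ij.2) := hrec n
    _ ≤ ∑ ij ∈ antidiagonal n, (w ij.1 ij.2 * β -
          if ij = (s, n - s) then w ij.1 ij.2 * β * (1 - q s) else 0) := sum_le_sum hterm
    _ = (∑ ij ∈ antidiagonal n, w ij.1 ij.2) * β - w s (n - s) * β * (1 - q s) := by
        rw [sum_sub_distrib, sum_mul, sum_ite_eq', if_pos hmem]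
    _ ≤ (1 - c * (1 - q s)) * β := by
        have := mul_le_mul_of_nonneg_right (hw_sum n) hβ
        have := mul_le_mul_of_nonneg_right (hcw (n - s)) (mul_nonneg hβ (sub_nonneg.2 (hq1 s)))
        linarith

theorem tendsto_zero_of_le_sum_antidiagonal (hw : ∀ i j, 0 ≤ w i j)
    (hw_sum : ∀ n, ∑ ij ∈ antidiagonal n, w ij.1 ij.2 ≤ 1) (hc : 0 < c) (hcw : ∀ j, c ≤ w s j)
    (hq0 : ∀ n, 0 ≤ q n) (hq1 : ∀ n, q n ≤ 1) (hqs : q s < 1)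
    (hrec : ∀ n, q (n + 1) ≤ ∑ ij ∈ antidiagonal n, w ij.1 ij.2 * (q ij.1 * q ij.2)) :
    Tendsto q atTop (𝓝 0) := by
  have hc1 : c ≤ 1 := (hcw 0).trans <| (single_le_sum (f := fun ij : ℕ × ℕ => w ij.1 ij.2)
    (fun ij _ => hw ij.1 ij.2) (a := (s, 0)) (HasAntidiagonal.mem_antidiagonal.2 rfl)).trans
    (hw_sum s)
  have hr0 : 0 ≤ 1 - c * (1 - q s) := by nlinarith [hq0 s]
  have hr1 : 1 - c * (1 - q s) < 1 := by nlinarith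
  have hpow : ∀ k, ∀ᶠ n in atTop, q n ≤ (1 - c * (1 - q s)) ^ k := by
    intro k
    induction k with
    | zero => exact .of_forall fun n => (pow_zero (1 - c * (1 - q s))).symm ▸ hq1 n
    | succ k ih =>
      simpa only [pow_succ'] using
        eventually_le_mul_of_eventually_le hw hw_sum hcw hq0 hq1 hrec (pow_nonneg hr0 k) ih
  refine tendsto_order.2 ⟨fun a ha => .of_forall fun n => ha.trans_le (hq0 n), fun a ha => ?_⟩
  obtain ⟨k, hk⟩ :=
    ((tendsto_pow_atTop_nhds_zero_of_lt_one hr0 hr1).eventually (gt_mem_nhds ha)).exists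
  exact (hpow k).mono fun n hn => hn.trans_lt hk

end SubcriticalRecursion

namespace BTree

inductive Context (α : Type*) where
  | hole : Context α
  | left : α → Context α → BTree α → Context α
  | right : α → BTree α → Context α → Context α

namespace Context

def fill : Context α → BTree α → BTree α
  | hole, T => T
  | left a c r, T => node a (c.fill T) r
  | right a l c, T => node a l (c.fill T)

theorem size_fill (c : Context α) (T : BTree α) :
    (c.fill T).size = (c.fill nil).size + T.size := by
  induction c with
  | hole => simp [fill, size]
  | left a c r ih => simp only [fill, size, ih]; omega
  | right a l c ih => simp only [fill, size, ih]; omega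

theorem fill_injective (c : Context α) : Function.Injective c.fill := by
  induction c with
  | hole => exact fun _ _ h => h
  | left a c r ih => exact fun _ _ h => ih (node.inj h).2.1
  | right a l c ih => exact fun _ _ h => ih (node.inj h).2.2

end Context

theorem Subtree.exists_eq_fill {S T : BTree α} (h : Subtree S T) :
    ∃ c : Context α, T = c.fill S := by
  induction h with
  | refl => exact ⟨.hole, rfl⟩
  | @left l r a _ ih => obtain ⟨c, rfl⟩ := ih; exact ⟨.left a c r, rfl⟩
  | @right l r a _ ih => obtain ⟨c, rfl⟩ := ih; exact ⟨.right a l c, rfl⟩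

section ofSize

variable [Fintype α]

open Classical in
noncomputable def ofSize : ℕ → Finset (BTree α)
  | 0 => {nil}
  | n + 1 =>
    (antidiagonal n).attach.biUnion fun ij =>
      (univ ×ˢ ofSize ij.1.1 ×ˢ ofSize ij.1.2).image fun x => node x.1 x.2.1 x.2.2
  decreasing_by
    all_goals have := HasAntidiagonal.mem_antidiagonal.1 ij.2; omega

open Classical in
theorem ofSize_succ (n : ℕ) :
    ofSize (n + 1) = (antidiagonal n).biUnion fun ij =>
      (univ ×ˢ ofSize ij.1 ×ˢ ofSize ij.2).image fun x : α × BTree α × BTree α =>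
        node x.1 x.2.1 x.2.2 := by
  rw [ofSize]
  ext
  simp

@[simp]
theorem mem_ofSize {T : BTree α} {n : ℕ} : T ∈ ofSize n ↔ T.size = n := by
  classical
  induction T generalizing n with
  | nil => cases n <;> simp [ofSize, ofSize_succ, size]
  | node a l r ihl ihr =>
    cases n with
    | zero => simp [ofSize, size]
    | succ n => simp [ofSize_succ, size, ihl, ihr]

theorem card_ofSize (n : ℕ) : #(ofSize n : Finset (BTree α)) = catalan n * Fintype.card α ^ n := by
  classical
  induction n using Nat.strong_induction_on with
  | _ n ih =>
  cases n with
  | zero => simp [ofSize]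
  | succ n =>
    rw [ofSize_succ, card_biUnion, catalan_succ', sum_mul]
    · refine sum_congr rfl fun ij hij => ?_
      rw [HasAntidiagonal.mem_antidiagonal] at hij
      rw [card_image_of_injective _ (fun x y h =>
        have h := node.inj h; Prod.ext h.1 (Prod.ext h.2.1 h.2.2)), card_product,
        card_product, card_univ, ih _ (by omega), ih _ (by omega), ← hij]
      ring
    · intro ij _ ij' _ hne
      simp only [disjoint_left, mem_image, mem_product, mem_ofSize]
      rintro _ ⟨x, ⟨-, hl, hr⟩, rfl⟩ ⟨x', ⟨-, hl', hr'⟩, h⟩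
      obtain ⟨-, hl'', hr''⟩ := node.inj h
      exact hne (Prod.ext (by rw [← hl, ← hl', hl'']) (by rw [← hr, ← hr', hr'']))

end ofSize

theorem card_filter_ofSize_succ_le [Fintype α] (A : Set (BTree α)) [DecidablePred (· ∈ A)]
    (hA : ∀ a l r, node a l r ∈ A → l ∈ A ∧ r ∈ A) (n : ℕ) :
    #{T ∈ ofSize (n + 1) | T ∈ A} ≤ ∑ ij ∈ antidiagonal n,
      Fintype.card α * (#{T ∈ ofSize ij.1 | T ∈ A} * #{T ∈ ofSize ij.2 | T ∈ A}) := by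
  classical
  calc #{T ∈ ofSize (n + 1) | T ∈ A}
      ≤ #((antidiagonal n).biUnion fun ij =>
          (univ ×ˢ {T ∈ ofSize (α := α) ij.1 | T ∈ A} ×ˢ {T ∈ ofSize (α := α) ij.2 | T ∈ A}).image
            fun x : α × BTree α × BTree α => node x.1 x.2.1 x.2.2) := by
        refine card_le_card fun T hT => ?_
        obtain ⟨hT, hTA⟩ := mem_filter.1 hT
        cases T with
        | nil => simp [size] at hT
        | node a l r =>
          simp only [mem_biUnion, mem_image, mem_product, mem_filter, mem_ofSize]
          exact ⟨(l.size, r.size), HasAntidiagonal.mem_antidiagonal.2 (by simpa [size] using hT),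
            (a, l, r), ⟨mem_univ a, ⟨rfl, (hA a l r hTA).1⟩, rfl, (hA a l r hTA).2⟩, rfl⟩
    _ ≤ ∑ ij ∈ antidiagonal n,
          #(univ ×ˢ {T ∈ ofSize (α := α) ij.1 | T ∈ A} ×ˢ {T ∈ ofSize (α := α) ij.2 | T ∈ A}) :=
        card_biUnion_le.trans (sum_le_sum fun _ _ => card_image_le)
    _ = _ := by simp only [card_product, card_univ]

end BTree

section Density

variable [Fintype α]

theorem density_eq_card_filter (A : Set (BTree α)) [DecidablePred (· ∈ A)] (n : ℕ) :
    density A n = #{T ∈ BTree.ofSize n | T ∈ A} / (catalan n * Fintype.card α ^ n : ℝ) := by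
  rw [density, Nat.subtype_card {T ∈ BTree.ofSize n | T ∈ A} fun T => by
    rw [mem_filter, BTree.mem_ofSize, and_comm]]

theorem density_nonneg (A : Set (BTree α)) (n : ℕ) : 0 ≤ density A n := by
  unfold density
  positivity

theorem density_mono {A B : Set (BTree α)} (h : A ⊆ B) (n : ℕ) : density A n ≤ density B n := by
  classical
  rw [density_eq_card_filter, density_eq_card_filter]
  gcongr

variable [Nonempty α]

theorem catalan_mul_card_pow_pos (n : ℕ) : 0 < (catalan n * Fintype.card α ^ n : ℝ) :=
  mul_pos (Nat.cast_pos.2 (catalan_pos n)) (pow_pos (Nat.cast_pos.2 Fintype.card_pos) n)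

theorem density_add_density_compl (A : Set (BTree α)) (n : ℕ) :
    density A n + density Aᶜ n = 1 := by
  classical
  rw [density_eq_card_filter, density_eq_card_filter, ← add_div,
    div_eq_one_iff_eq (catalan_mul_card_pow_pos n).ne']
  simp only [Set.mem_compl_iff]
  exact_mod_cast (card_filter_add_card_filter_not _).trans (BTree.card_ofSize n)

theorem density_le_one (A : Set (BTree α)) (n : ℕ) : density A n ≤ 1 := by
  linarith [density_add_density_compl A n, density_nonneg Aᶜ n]

theorem hasDensity_one_iff_tendsto_density_compl (L : Set (BTree α)) :
    HasDensity L 1 ↔ Tendsto (density Lᶜ) atTop (𝓝 0) := by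
  have h : density L = fun n => 1 - density Lᶜ n :=
    funext fun n => eq_sub_of_add_eq (density_add_density_compl L n)
  rw [HasDensity, h]
  exact ⟨fun h => by simpa using h.const_sub 1, fun h => by simpa using h.const_sub 1⟩

theorem sum_density_fiber {ι : Type*} [Fintype ι] (f : BTree α → ι) (n : ℕ) :
    ∑ i, density {T | f T = i} n = 1 := by
  classical
  simp_rw [density_eq_card_filter, ← sum_div, Set.mem_ofPred_eq]
  rw [div_eq_one_iff_eq (catalan_mul_card_pow_pos n).ne']
  exact_mod_cast ((card_eq_sum_card_fiberwise fun _ _ => mem_univ _).symm.trans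
    (BTree.card_ofSize n))

theorem density_size_pos_of_mem {A : Set (BTree α)} {T : BTree α} (hT : T ∈ A) :
    0 < density A T.size := by
  classical
  rw [density_eq_card_filter]
  refine div_pos ?_ (catalan_mul_card_pow_pos _)
  exact_mod_cast card_pos.2 ⟨T, mem_filter.2 ⟨BTree.mem_ofSize.2 rfl, hT⟩⟩

theorem density_size_lt_one_of_notMem {A : Set (BTree α)} {T : BTree α} (hT : T ∉ A) :
    density A T.size < 1 := by
  linarith [density_add_density_compl A T.size, density_size_pos_of_mem (A := Aᶜ) hT]

theorem density_succ_le (A : Set (BTree α))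
    (hA : ∀ a l r, BTree.node a l r ∈ A → l ∈ A ∧ r ∈ A) (n : ℕ) :
    density A (n + 1) ≤ ∑ ij ∈ antidiagonal n,
      (catalan ij.1 * catalan ij.2 / catalan (ij.1 + ij.2 + 1) : ℝ) *
        (density A ij.1 * density A ij.2) := by
  classical
  simp_rw [density_eq_card_filter]
  calc _ ≤ ((∑ ij ∈ antidiagonal n, Fintype.card α * (#{T ∈ BTree.ofSize ij.1 | T ∈ A} *
          #{T ∈ BTree.ofSize ij.2 | T ∈ A}) : ℕ) : ℝ) /
            (catalan (n + 1) * Fintype.card α ^ (n + 1)) := by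
        gcongr
        exact BTree.card_filter_ofSize_succ_le A hA n
    _ = _ := by
      push_cast
      rw [sum_div]
      refine sum_congr rfl fun ⟨i, j⟩ hij => ?_
      obtain rfl := HasAntidiagonal.mem_antidiagonal.1 hij
      have : (Fintype.card α : ℝ) ≠ 0 := (Nat.cast_pos.2 Fintype.card_pos).ne'
      have : (catalan i : ℝ) ≠ 0 := (Nat.cast_pos.2 (catalan_pos _)).ne'
      have : (catalan j : ℝ) ≠ 0 := (Nat.cast_pos.2 (catalan_pos _)).ne'
      have : (catalan (i + j + 1) : ℝ) ≠ 0 := (Nat.cast_pos.2 (catalan_pos _)).ne'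
      field_simp
      ring

theorem density_le_pow_mul_density {A B : Set (BTree α)} {g : BTree α → BTree α}
    (hg : Function.Injective g) (m : ℕ) (hAB : ∀ T ∈ A, g T ∈ B ∧ (g T).size = T.size + m)
    (n : ℕ) : density A n ≤ (4 * Fintype.card α) ^ m * density B (n + m) := by
  classical
  have hcard : #{T ∈ BTree.ofSize n | T ∈ A} ≤ #{T ∈ BTree.ofSize (n + m) | T ∈ B} := by
    refine card_le_card_of_injOn g (fun T hT => ?_) hg.injOn
    simp only [coe_filter, BTree.mem_ofSize, Set.mem_ofPred_eq] at hT ⊢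
    obtain ⟨hgB, hgsize⟩ := hAB T hT.2
    exact ⟨hgsize.trans (by rw [hT.1]), hgB⟩
  have hcat : (catalan (n + m) * Fintype.card α ^ (n + m) : ℝ) ≤
      (4 * Fintype.card α) ^ m * (catalan n * Fintype.card α ^ n) := by
    have : (catalan (n + m) : ℝ) ≤ 4 ^ m * catalan n := by
      exact_mod_cast catalan_add_le_four_pow_mul n m
    calc (catalan (n + m) * Fintype.card α ^ (n + m) : ℝ)
        ≤ 4 ^ m * catalan n * Fintype.card α ^ (n + m) := by gcongr
      _ = _ := by ring
  rw [density_eq_card_filter, density_eq_card_filter, mul_div_assoc',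
    div_le_div_iff₀ (catalan_mul_card_pow_pos n) (catalan_mul_card_pow_pos (n + m))]
  calc (#{T ∈ BTree.ofSize n | T ∈ A} : ℝ) * (catalan (n + m) * Fintype.card α ^ (n + m))
      ≤ #{T ∈ BTree.ofSize (n + m) | T ∈ B} *
          ((4 * Fintype.card α) ^ m * (catalan n * Fintype.card α ^ n)) := by
        gcongr
    _ = _ := by ring

theorem tendsto_density_zero_of_subtree_closed {A : Set (BTree α)}
    (hA : ∀ a l r, BTree.node a l r ∈ A → l ∈ A ∧ r ∈ A) {S : BTree α} (hS : S ∉ A) :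
    Tendsto (density A) atTop (𝓝 0) := by
  refine tendsto_zero_of_le_sum_antidiagonal
    (w := fun i j => (catalan i * catalan j / catalan (i + j + 1) : ℝ))
    (fun i j => by positivity) (fun n => (sum_antidiagonal_catalan_mul_div n).le)
    ?_ (catalan_div_four_pow_le S.size) (density_nonneg A) (density_le_one A)
    (density_size_lt_one_of_notMem hS) (density_succ_le A hA)
  exact div_pos (Nat.cast_pos.2 (catalan_pos S.size)) (by positivity)

end Density

theorem Run.node_iff {Q : Type*} {Δ : Option Q → Option Q → α → Q → Prop} {a : α}
    {l r : BTree α} {o : Option Q} :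
    Run Δ (BTree.node a l r) o ↔ ∃ ql qr q, Run Δ l ql ∧ Run Δ r qr ∧ Δ ql qr a q ∧ o = some q :=
  ⟨fun | .node hl hr hΔ => ⟨_, _, _, hl, hr, hΔ, rfl⟩,
    fun ⟨_, _, _, hl, hr, hΔ, ho⟩ => ho ▸ .node hl hr hΔ⟩

theorem Run.fill_congr {Q : Type*} (Δ : Option Q → Option Q → α → Q → Prop)
    (c : BTree.Context α) {T₁ T₂ : BTree α} (h : Run Δ T₁ = Run Δ T₂) :
    Run Δ (c.fill T₁) = Run Δ (c.fill T₂) := by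
  induction c with
  | hole => exact h
  | left a c r ih => funext o; simp only [BTree.Context.fill, Run.node_iff, ih]
  | right a l c ih => funext o; simp only [BTree.Context.fill, Run.node_iff, ih]

theorem RegularTreeLang.exists_finite_congruence {L : Set (BTree α)} (hL : RegularTreeLang L) :
    ∃ (ι : Type) (_ : Finite ι) (f : BTree α → ι),
      (∀ (c : BTree.Context α) T₁ T₂, f T₁ = f T₂ → f (c.fill T₁) = f (c.fill T₂)) ∧
      ∀ T₁ T₂, f T₁ = f T₂ → T₁ ∈ L → T₂ ∈ L := by
  obtain ⟨Q, _, Δ, F, rfl⟩ := hL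
  refine ⟨Option Q → Prop, inferInstance, Run Δ, fun c _ _ => Run.fill_congr Δ c, ?_⟩
  intro T₁ T₂ h hT₁
  simpa only [Set.mem_ofPred_eq, TAccepts, h] using hT₁

theorem exists_context_fill_notMem {ι : Type*} {L : Set (BTree α)} (f : BTree α → ι)
    (hcongr : ∀ (c : BTree.Context α) T₁ T₂, f T₁ = f T₂ → f (c.fill T₁) = f (c.fill T₂))
    (hsat : ∀ T₁ T₂, f T₁ = f T₂ → T₁ ∈ L → T₂ ∈ L)
    (hL : ∀ S, ∃ T, BTree.Subtree S T ∧ T ∉ L) (i : ι) :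
    ∃ c : BTree.Context α, ∀ T, f T = i → c.fill T ∉ L := by
  by_cases hi : ∃ T₀, f T₀ = i
  · obtain ⟨T₀, rfl⟩ := hi
    obtain ⟨T', hsub, hT'⟩ := hL T₀
    obtain ⟨c, rfl⟩ := hsub.exists_eq_fill
    exact ⟨c, fun T hT hmem => hT' (hsat _ _ (hcongr c T T₀ hT) hmem)⟩
  · exact ⟨.hole, fun T hT => absurd ⟨T, hT⟩ hi⟩

theorem exists_frequently_le_density_compl [Fintype α] [Nonempty α] {ι : Type*} [Finite ι]
    {L : Set (BTree α)} (f : BTree α → ι)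
    (hf : ∀ i, ∃ c : BTree.Context α, ∀ T, f T = i → c.fill T ∉ L) :
    ∃ ε > 0, ∃ᶠ n in atTop, ε ≤ density Lᶜ n := by
  have := Fintype.ofFinite ι
  have : Nonempty ι := ⟨f .nil⟩
  choose c hc using hf
  obtain ⟨M, hM⟩ := (Set.finite_range fun i => ((c i).fill .nil).size).bddAbove
  have hK : (1 : ℝ) ≤ 4 * Fintype.card α := by
    have : (1 : ℝ) ≤ Fintype.card α := Nat.one_le_cast.2 Fintype.card_pos
    linarith
  refine ⟨(Fintype.card ι * (4 * Fintype.card α) ^ M : ℝ)⁻¹, by positivity,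
    frequently_atTop.2 fun n => ?_⟩
  -- Pigeonhole: some class `f ⁻¹' {i}` holds a `1 / |ι|` share of the trees of size `n`.
  obtain ⟨i, -, hi⟩ := exists_le_of_sum_le univ_nonempty
    (f := fun _ => (Fintype.card ι : ℝ)⁻¹) (g := fun i => density {T | f T = i} n)
    (by simp [sum_density_fiber])
  set m := ((c i).fill .nil).size
  have hmove : density {T | f T = i} n ≤ (4 * Fintype.card α) ^ m * density Lᶜ (n + m) :=
    density_le_pow_mul_density (c i).fill_injective m
      (fun T hT => ⟨hc i T hT, by rw [BTree.Context.size_fill, add_comm]⟩) n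
  refine ⟨n + m, Nat.le_add_right n m, ?_⟩
  calc (Fintype.card ι * (4 * Fintype.card α) ^ M : ℝ)⁻¹
      ≤ (Fintype.card ι : ℝ)⁻¹ / (4 * Fintype.card α) ^ m := by
        rw [mul_inv, div_eq_mul_inv]
        gcongr
        exact hM ⟨i, rfl⟩
    _ ≤ density {T | f T = i} n / (4 * Fintype.card α) ^ m := by gcongr
    _ ≤ density Lᶜ (n + m) := by
        rw [div_le_iff₀' (by positivity)]
        exact hmove

/-- A regular tree language has asymptotic density 1 iff there is a tree `S`
such that every tree containing `S` as a subtree belongs to `L`. -/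
theorem density_one_regular_tree_iff {α : Type*} [Fintype α] [Nonempty α]
    (L : Set (BTree α)) (hL : RegularTreeLang L) :
    HasDensity L 1 ↔ ∃ S : BTree α, ∀ T : BTree α, BTree.Subtree S T → T ∈ L := by
  rw [hasDensity_one_iff_tendsto_density_compl]
  constructor
  · intro h
    by_contra! hS
    obtain ⟨ι, _, f, hcongr, hsat⟩ := hL.exists_finite_congruence
    obtain ⟨ε, hε, hfreq⟩ :=
      exists_frequently_le_density_compl f (exists_context_fill_notMem f hcongr hsat hS)
    obtain ⟨n, hεn, hnε⟩ := (hfreq.and_eventually (h.eventually (gt_mem_nhds hε))).exists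
    exact (hεn.trans_lt hnε).false
  · rintro ⟨S, hS⟩
    refine squeeze_zero (density_nonneg _) (density_mono fun T hT hST => hT (hS T hST))
      (tendsto_density_zero_of_subtree_closed (S := S) ?_ fun h => h (.refl S))
    exact fun a l r h => ⟨fun hl => h hl.left, fun hr => h hr.right⟩

end Sparse
end

section
/- Let Σ be a finite nonempty alphabet, L ⊆ ℬ^Σ and T ∈ ℬ^Σ. Then under the random binary search tree distribution, lim_{n→∞} Prob^bst_n(LT ∩ ℬ^Σ_n) = 0; in fact Prob^bst_n(LT ∩ ℬ^Σ_n) ≤ 1/n for all n > 1 + |T|. -/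
/-!
Summing the defining recursion of `probBst` over the root label and the two subtrees shows, by
strong induction on `n`, that `probBst` is a probability distribution on the trees with `n` nodes.
A tree `conc_a(S, T)` with `n` nodes has probability `probBst S * probBst T / (n * |Σ|)`, so
summing over the `|Σ|` root labels and over `S ∈ L` with `n - 1 - |T|` nodes gives
`Prob^bst_n(LT) = probBst T * Prob^bst_{n-1-|T|}(L) / n ≤ 1 / n`.
-/

open Filter Topology

namespace Sparse

variable {α : Type*}

/-- The probability of the tree `T` under the random binary search tree distribution on trees
of its size: `Prob^bst(nil) = 1`, single-node trees get probability `1/|Σ|`, and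
`Prob^bst(conc_a(l,r)) = (1/(n·|Σ|))·Prob^bst(l)·Prob^bst(r)` where `n` is the total size. -/
noncomputable def probBst [Fintype α] : BTree α → ℝ
  | BTree.nil => 1
  | BTree.node _ l r =>
      (1 / (((l.size + r.size + 1 : ℕ) : ℝ) * (Fintype.card α : ℝ))) * probBst l * probBst r

/-- `Prob^bst_n(M)`: the probability of the set of `n`-node trees in `M` under the random
binary search tree distribution. -/
noncomputable def bstProb [Fintype α] (n : ℕ) (M : Set (BTree α)) : ℝ :=
  ∑' T : {T : BTree α // T ∈ M ∧ T.size = n}, probBst T.1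

namespace BTree

variable {α : Type*}

instance : Unique {T : BTree α // T.size = 0} where
  default := ⟨nil, rfl⟩
  uniq := fun
    | ⟨nil, _⟩ => rfl
    | ⟨node _ _ _, h⟩ => absurd h (by simp [size])

def nodeOfSizes (k : ℕ) :
    α × (Σ j : Fin (k + 1), {l : BTree α // l.size = j} × {r : BTree α // r.size = k - j}) →
      {T : BTree α // T.size = k + 1}
  | (a, ⟨j, ⟨l, hl⟩, ⟨r, hr⟩⟩) =>
    ⟨node a l r, by have := j.isLt; simp only [size]; omega⟩

theorem nodeOfSizes_bijective (k : ℕ) : Function.Bijective (nodeOfSizes (α := α) k) := by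
  constructor
  · rintro ⟨a, j, ⟨l, hl⟩, ⟨r, hr⟩⟩ ⟨a', j', ⟨l', hl'⟩, ⟨r', hr'⟩⟩ h
    simp only [nodeOfSizes, Subtype.mk.injEq, node.injEq] at h
    obtain ⟨rfl, rfl, rfl⟩ := h
    obtain rfl : j = j' := Fin.ext (hl.symm.trans hl')
    rfl
  · rintro ⟨_ | ⟨a, l, r⟩, h⟩
    · simp [size] at h
    · simp only [size] at h
      exact ⟨(a, ⟨⟨l.size, by omega⟩, ⟨l, rfl⟩, ⟨r, show r.size = k - l.size by omega⟩⟩), rfl⟩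

instance finite_size [Finite α] (n : ℕ) : Finite {T : BTree α // T.size = n} := by
  induction n using Nat.strong_induction_on with
  | _ n ih =>
    cases n with
    | zero => infer_instance
    | succ k =>
      have := fun j : Fin (k + 1) => ih j j.isLt
      have := fun j : Fin (k + 1) => ih (k - j) (by omega)
      exact Finite.of_surjective _ (nodeOfSizes_bijective k).2

instance finite_mem_size [Finite α] (M : Set (BTree α)) (n : ℕ) :
    Finite {T : BTree α // T ∈ M ∧ T.size = n} :=
  Finite.of_injective (fun T => (⟨T.1, T.2.2⟩ : {T : BTree α // T.size = n}))
    fun _ _ h => Subtype.ext (Subtype.mk.inj h)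

end BTree

section

open BTree

variable {α : Type*}

def concLNode (L : Set (BTree α)) (T : BTree α) (m : ℕ) :
    α × {S : BTree α // S ∈ L ∧ S.size = m} →
      {X : BTree α // X ∈ concL L T ∧ X.size = m + T.size + 1}
  | (a, ⟨S, hS, hm⟩) => ⟨node a S T, ⟨a, S, hS, rfl⟩, by simp [size, hm]⟩

theorem concLNode_bijective (L : Set (BTree α)) (T : BTree α) (m : ℕ) :
    Function.Bijective (concLNode L T m) := by
  constructor
  · rintro ⟨a, S, hS, hm⟩ ⟨a', S', hS', hm'⟩ h
    simp only [concLNode, Subtype.mk.injEq, node.injEq] at h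
    obtain ⟨rfl, rfl, -⟩ := h
    rfl
  · rintro ⟨_, ⟨a, S, hS, rfl⟩, h⟩
    simp only [size] at h
    exact ⟨(a, ⟨S, hS, by omega⟩), rfl⟩

variable [Fintype α]

noncomputable instance (n : ℕ) : Fintype {T : BTree α // T.size = n} := Fintype.ofFinite _

noncomputable instance (M : Set (BTree α)) (n : ℕ) :
    Fintype {T : BTree α // T ∈ M ∧ T.size = n} :=
  Fintype.ofFinite _

theorem probBst_nonneg (T : BTree α) : 0 ≤ probBst T := by
  induction T with
  | nil => exact zero_le_one
  | node a l r ihl ihr => unfold probBst; positivity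

theorem probBst_node_of_size_eq {a : α} {l r : BTree α} {n : ℕ} (h : l.size + r.size + 1 = n) :
    probBst (node a l r) = probBst l * probBst r / (n * Fintype.card α) := by
  rw [probBst, h]
  ring

theorem sum_probBst_eq_one [Nonempty α] (n : ℕ) :
    ∑ T : {T : BTree α // T.size = n}, probBst T.1 = 1 := by
  induction n using Nat.strong_induction_on with
  | _ n ih =>
    cases n with
    | zero => exact (Fintype.sum_unique _).trans rfl
    | succ k =>
      rw [← (nodeOfSizes_bijective k).sum_comp, Fintype.sum_prod_type]
      simp only [Fintype.sum_sigma, Fintype.sum_prod_type]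
      have hterm : ∀ a (j : Fin (k + 1)) (l : {l : BTree α // l.size = j})
          (r : {r : BTree α // r.size = k - j}), probBst (nodeOfSizes k (a, ⟨j, (l, r)⟩)).1 =
          probBst l.1 * probBst r.1 / ((k + 1 : ℕ) * Fintype.card α) := by
        rintro a j ⟨l, hl⟩ ⟨r, hr⟩
        exact probBst_node_of_size_eq (by have := j.isLt; omega)
      have hsplit : ∀ j : Fin (k + 1), ∑ l : {l : BTree α // l.size = j},
          ∑ r : {r : BTree α // r.size = k - j}, probBst l.1 * probBst r.1 = 1 := fun j => by
        rw [← Finset.sum_mul_sum, ih j j.isLt, ih (k - j) (by omega), one_mul]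
      simp only [hterm, ← Finset.sum_div, hsplit]
      rw [div_eq_one_iff_eq (by positivity)]
      simp only [Finset.sum_const, Finset.card_univ, Fintype.card_fin, nsmul_eq_mul, mul_one]
      ring

theorem bstProb_eq_sum (n : ℕ) (M : Set (BTree α)) :
    bstProb n M = ∑ T : {T : BTree α // T ∈ M ∧ T.size = n}, probBst T.1 :=
  tsum_fintype _

theorem bstProb_nonneg (n : ℕ) (M : Set (BTree α)) : 0 ≤ bstProb n M :=
  tsum_nonneg fun T => probBst_nonneg T.1

theorem bstProb_univ [Nonempty α] (n : ℕ) : bstProb n (Set.univ : Set (BTree α)) = 1 := by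
  rw [bstProb_eq_sum, ← sum_probBst_eq_one (α := α) n]
  exact Fintype.sum_equiv (Equiv.subtypeEquivRight fun T => by simp) _ _ fun _ => rfl

theorem bstProb_mono {M M' : Set (BTree α)} (h : M ⊆ M') (n : ℕ) :
    bstProb n M ≤ bstProb n M' :=
  Summable.tsum_le_tsum_of_inj (fun T => ⟨T.1, h T.2.1, T.2.2⟩)
    (fun _ _ h => Subtype.ext (Subtype.mk.inj h)) (fun T _ => probBst_nonneg T.1) (fun _ => le_rfl)
    Summable.of_finite Summable.of_finite

theorem bstProb_le_one [Nonempty α] (n : ℕ) (M : Set (BTree α)) : bstProb n M ≤ 1 :=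
  (bstProb_mono (Set.subset_univ M) n).trans_eq (bstProb_univ n)

theorem probBst_le_one [Nonempty α] (T : BTree α) : probBst T ≤ 1 :=
  (Finset.single_le_sum (fun S _ => probBst_nonneg S.1) (Finset.mem_univ ⟨T, rfl⟩)).trans_eq
    (sum_probBst_eq_one T.size)

theorem bstProb_concL [Nonempty α] (L : Set (BTree α)) (T : BTree α) (m : ℕ) :
    bstProb (m + T.size + 1) (concL L T) = probBst T / (m + T.size + 1 : ℕ) * bstProb m L := by
  have hterm : ∀ a S, probBst (concLNode L T m (a, S)).1 =
      probBst S.1 * probBst T / ((m + T.size + 1 : ℕ) * Fintype.card α) := by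
    rintro a ⟨S, hS, rfl⟩
    exact probBst_node_of_size_eq rfl
  rw [bstProb_eq_sum, bstProb_eq_sum, ← (concLNode_bijective L T m).sum_comp,
    Fintype.sum_prod_type]
  simp only [hterm, ← Finset.sum_div, ← Finset.sum_mul, Finset.sum_const, Finset.card_univ,
    nsmul_eq_mul]
  field_simp

theorem bstProb_concL_le [Nonempty α] (L : Set (BTree α)) (T : BTree α) {n : ℕ}
    (hn : T.size < n) : bstProb n (concL L T) ≤ 1 / n := by
  obtain ⟨m, rfl⟩ : ∃ m, n = m + T.size + 1 := ⟨n - T.size - 1, by omega⟩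
  rw [bstProb_concL, div_mul_eq_mul_div, mul_comm]
  gcongr
  exact mul_le_one₀ (bstProb_le_one m L) (probBst_nonneg T) (probBst_le_one T)

end

/-- Under the random binary search tree distribution,
`Prob^bst_n(LT ∩ ℬ^Σ_n) → 0`; in fact `Prob^bst_n(LT ∩ ℬ^Σ_n) ≤ 1/n` for all `n > 1 + |T|`. -/
theorem bst_concL_sparse {α : Type*} [Fintype α] [Nonempty α]
    (L : Set (BTree α)) (T : BTree α) :
    Tendsto (fun n => bstProb n (concL L T)) atTop (𝓝 0) ∧
    ∀ n : ℕ, 1 + T.size < n → bstProb n (concL L T) ≤ 1 / (n : ℝ) := by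
  have hbound : ∀ n : ℕ, 1 + T.size < n → bstProb n (concL L T) ≤ 1 / (n : ℝ) :=
    fun n hn => bstProb_concL_le L T (by omega)
  exact ⟨squeeze_zero' (Eventually.of_forall fun n => bstProb_nonneg n _)
    ((eventually_gt_atTop _).mono hbound) tendsto_one_div_atTop_nhds_zero_nat, hbound⟩

end Sparse
end
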